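/- arXiv:2011.12141 — 2 statements merged into one kernel-verified Lean document; each statement's English description precedes it below -/
import Mathlib

section
/- Let K be a division ring and X = !![a₁, b₁; a₂, b₂] a 2×2 matrix over K. Assume a₁ - b₁b₂⁻¹a₂, a₂ - b₂b₁⁻¹a₁, b₁ - a₁a₂⁻¹b₂, b₂ - a₂a₁⁻¹b₁ are all nonzero (in particular a₁, a₂, b₁, b₂ ≠ 0). Then the matrix Y = !![(a₁ - b₁b₂⁻¹a₂)⁻¹, (a₂ - b₂b₁⁻¹a₁)⁻¹; (b₁ - a₁a₂⁻¹b₂)⁻¹, (b₂ - a₂a₁⁻¹b₁)⁻¹] satisfies X * Y = 1. -/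
theorem quasideterminant_inverse_right (K : Type*) [DivisionRing K]
    (a₁ b₁ a₂ b₂ : K)
    (h₁ : a₁ - b₁ * b₂⁻¹ * a₂ ≠ 0) (h₂ : a₂ - b₂ * b₁⁻¹ * a₁ ≠ 0)
    (h₃ : b₁ - a₁ * a₂⁻¹ * b₂ ≠ 0) (h₄ : b₂ - a₂ * a₁⁻¹ * b₁ ≠ 0)
    (ha₁ : a₁ ≠ 0) (ha₂ : a₂ ≠ 0) (hb₁ : b₁ ≠ 0) (hb₂ : b₂ ≠ 0) :
    (!![a₁, b₁; a₂, b₂] : Matrix (Fin 2) (Fin 2) K) *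
      !![(a₁ - b₁ * b₂⁻¹ * a₂)⁻¹, (a₂ - b₂ * b₁⁻¹ * a₁)⁻¹;
         (b₁ - a₁ * a₂⁻¹ * b₂)⁻¹, (b₂ - a₂ * a₁⁻¹ * b₁)⁻¹] = 1 := by
  set p := a₁ - b₁ * b₂⁻¹ * a₂ with hp
  set r := a₂ - b₂ * b₁⁻¹ * a₁ with hr
  have hq : (b₁ - a₁ * a₂⁻¹ * b₂) = -(p * (a₂⁻¹ * b₂)) := by
    rw [hp, sub_mul]
    have : b₁ * b₂⁻¹ * a₂ * (a₂⁻¹ * b₂) = b₁ := by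
      rw [mul_assoc (b₁ * b₂⁻¹), ← mul_assoc a₂, mul_inv_cancel₀ ha₂, one_mul,
        mul_assoc, inv_mul_cancel₀ hb₂, mul_one]
    rw [this, mul_assoc]
    abel
  have hs : (b₂ - a₂ * a₁⁻¹ * b₁) = -(r * (a₁⁻¹ * b₁)) := by
    rw [hr, sub_mul]
    have : b₂ * b₁⁻¹ * a₁ * (a₁⁻¹ * b₁) = b₂ := by
      rw [mul_assoc (b₂ * b₁⁻¹), ← mul_assoc a₁, mul_inv_cancel₀ ha₁, one_mul,
        mul_assoc, inv_mul_cancel₀ hb₁, mul_one]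
    rw [this, mul_assoc]
    abel
  have hqinv : (b₁ - a₁ * a₂⁻¹ * b₂)⁻¹ = -(b₂⁻¹ * a₂ * p⁻¹) := by
    rw [hq, inv_neg, mul_inv_rev, mul_inv_rev, inv_inv, mul_assoc]
  have hsinv : (b₂ - a₂ * a₁⁻¹ * b₁)⁻¹ = -(b₁⁻¹ * a₁ * r⁻¹) := by
    rw [hs, inv_neg, mul_inv_rev, mul_inv_rev, inv_inv, mul_assoc]
  ext i j
  fin_cases i <;> fin_cases j <;>
    simp [Matrix.mul_apply, Fin.sum_univ_two, hqinv, hsinv, Matrix.one_apply]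
  · rw [show b₁ * (b₂⁻¹ * a₂ * p⁻¹) = (b₁ * b₂⁻¹ * a₂) * p⁻¹ by noncomm_ring,
      ← sub_eq_add_neg, ← sub_mul, ← hp, mul_inv_cancel₀ h₁]
  · rw [show b₁ * (b₁⁻¹ * a₁ * r⁻¹) = (b₁ * b₁⁻¹) * (a₁ * r⁻¹) by noncomm_ring,
      mul_inv_cancel₀ hb₁, one_mul, add_neg_cancel]
  · rw [show b₂ * (b₂⁻¹ * a₂ * p⁻¹) = (b₂ * b₂⁻¹) * (a₂ * p⁻¹) by noncomm_ring,
      mul_inv_cancel₀ hb₂, one_mul, add_neg_cancel]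
  · rw [show b₂ * (b₁⁻¹ * a₁ * r⁻¹) = (b₂ * b₁⁻¹ * a₁) * r⁻¹ by noncomm_ring,
      ← sub_eq_add_neg, ← sub_mul, ← hr, mul_inv_cancel₀ h₂]
end

section
/- Under the same hypotheses as above (all four quasideterminant expressions nonzero), the matrix Y also satisfies Y * X = 1; hence X is invertible in the ring of 2×2 matrices over K with inverse Y. -/
section Aux

variable {K : Type*} [DivisionRing K]

/-- generic "left inverse" entry computation. -/
lemma quasi_aux_sum (p c a z : K) :
    p⁻¹ * a + (c * p)⁻¹ * z = p⁻¹ * (a + c⁻¹ * z) := by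
  rw [mul_inv_rev, mul_add, mul_assoc]

/-- `x * ((1 - t) * x)⁻¹ + y * ((1 - t⁻¹) * y)⁻¹ = 1`. -/
lemma quasi_aux_one (t x y : K) (hx : x ≠ 0) (hy : y ≠ 0) (ht : t ≠ 0)
    (h1 : (1 : K) - t ≠ 0) :
    x * ((1 - t) * x)⁻¹ + y * ((1 - t⁻¹) * y)⁻¹ = 1 := by
  have e1 : x * ((1 - t) * x)⁻¹ = (1 - t)⁻¹ := by
    rw [mul_inv_rev, mul_inv_cancel_left₀ hx]
  have e2 : y * ((1 - t⁻¹) * y)⁻¹ = (1 - t⁻¹)⁻¹ := by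
    rw [mul_inv_rev, mul_inv_cancel_left₀ hy]
  have key : (1 : K) - t⁻¹ = -t⁻¹ * (1 - t) := by
    rw [neg_mul, mul_sub, mul_one, inv_mul_cancel₀ ht, neg_sub]
  rw [e1, e2, key, mul_inv_rev, inv_neg, inv_inv]
  have e3 : (1 - t)⁻¹ + (1 - t)⁻¹ * -t = (1 - t)⁻¹ * (1 - t) := by noncomm_ring
  rw [e3, inv_mul_cancel₀ h1]

/-- `x * (v * x)⁻¹ + y * (-v * y)⁻¹ = 0`. -/
lemma quasi_aux_zero (v x y : K) (hx : x ≠ 0) (hy : y ≠ 0) :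
    x * (v * x)⁻¹ + y * (-v * y)⁻¹ = 0 := by
  rw [mul_inv_rev, mul_inv_rev, ← mul_assoc, ← mul_assoc, mul_inv_cancel₀ hx,
    mul_inv_cancel₀ hy, one_mul, one_mul, inv_neg, add_neg_cancel]

end Aux

theorem quasideterminant_inverse_left (K : Type*) [DivisionRing K]
    (a₁ b₁ a₂ b₂ : K)
    (h₁ : a₁ - b₁ * b₂⁻¹ * a₂ ≠ 0) (h₂ : a₂ - b₂ * b₁⁻¹ * a₁ ≠ 0)
    (h₃ : b₁ - a₁ * a₂⁻¹ * b₂ ≠ 0) (h₄ : b₂ - a₂ * a₁⁻¹ * b₁ ≠ 0)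
    (ha₁ : a₁ ≠ 0) (ha₂ : a₂ ≠ 0) (hb₁ : b₁ ≠ 0) (hb₂ : b₂ ≠ 0) :
    (!![(a₁ - b₁ * b₂⁻¹ * a₂)⁻¹, (a₂ - b₂ * b₁⁻¹ * a₁)⁻¹;
        (b₁ - a₁ * a₂⁻¹ * b₂)⁻¹, (b₂ - a₂ * a₁⁻¹ * b₁)⁻¹] : Matrix (Fin 2) (Fin 2) K) *
      !![a₁, b₁; a₂, b₂] = 1 ∧
    IsUnit (!![a₁, b₁; a₂, b₂] : Matrix (Fin 2) (Fin 2) K) := by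
  -- factorizations of the four quasideterminants
  have fq : a₂ - b₂ * b₁⁻¹ * a₁ = -(b₂ * b₁⁻¹) * (a₁ - b₁ * b₂⁻¹ * a₂) := by
    rw [neg_mul, mul_sub, neg_sub, ← mul_assoc (b₂ * b₁⁻¹) (b₁ * b₂⁻¹) a₂,
      mul_assoc b₂ b₁⁻¹ (b₁ * b₂⁻¹), ← mul_assoc b₁⁻¹ b₁ b₂⁻¹, inv_mul_cancel₀ hb₁,
      one_mul, mul_inv_cancel₀ hb₂, one_mul]
  have fs : b₂ - a₂ * a₁⁻¹ * b₁ = -(a₂ * a₁⁻¹) * (b₁ - a₁ * a₂⁻¹ * b₂) := by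
    rw [neg_mul, mul_sub, neg_sub, ← mul_assoc (a₂ * a₁⁻¹) (a₁ * a₂⁻¹) b₂,
      mul_assoc a₂ a₁⁻¹ (a₁ * a₂⁻¹), ← mul_assoc a₁⁻¹ a₁ a₂⁻¹, inv_mul_cancel₀ ha₁,
      one_mul, mul_inv_cancel₀ ha₂, one_mul]
  have hcq' : (-(b₂ * b₁⁻¹))⁻¹ = -(b₁ * b₂⁻¹) := by
    rw [inv_neg, mul_inv_rev, inv_inv]
  have hcs' : (-(a₂ * a₁⁻¹))⁻¹ = -(a₁ * a₂⁻¹) := by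
    rw [inv_neg, mul_inv_rev, inv_inv]
  -- entries of Y * X
  have e11 : (a₁ - b₁ * b₂⁻¹ * a₂)⁻¹ * a₁ + (a₂ - b₂ * b₁⁻¹ * a₁)⁻¹ * a₂ = 1 := by
    rw [fq, quasi_aux_sum, hcq', neg_mul, ← sub_eq_add_neg, inv_mul_cancel₀ h₁]
  have e12 : (a₁ - b₁ * b₂⁻¹ * a₂)⁻¹ * b₁ + (a₂ - b₂ * b₁⁻¹ * a₁)⁻¹ * b₂ = 0 := by
    rw [fq, quasi_aux_sum, hcq', neg_mul, ← sub_eq_add_neg, mul_assoc b₁ b₂⁻¹ b₂,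
      inv_mul_cancel₀ hb₂, mul_one, sub_self, mul_zero]
  have e21 : (b₁ - a₁ * a₂⁻¹ * b₂)⁻¹ * a₁ + (b₂ - a₂ * a₁⁻¹ * b₁)⁻¹ * a₂ = 0 := by
    rw [fs, quasi_aux_sum, hcs', neg_mul, ← sub_eq_add_neg, mul_assoc a₁ a₂⁻¹ a₂,
      inv_mul_cancel₀ ha₂, mul_one, sub_self, mul_zero]
  have e22 : (b₁ - a₁ * a₂⁻¹ * b₂)⁻¹ * b₁ + (b₂ - a₂ * a₁⁻¹ * b₁)⁻¹ * b₂ = 1 := by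
    rw [fs, quasi_aux_sum, hcs', neg_mul, ← sub_eq_add_neg, inv_mul_cancel₀ h₃]
  have hYX : (!![(a₁ - b₁ * b₂⁻¹ * a₂)⁻¹, (a₂ - b₂ * b₁⁻¹ * a₁)⁻¹;
        (b₁ - a₁ * a₂⁻¹ * b₂)⁻¹, (b₂ - a₂ * a₁⁻¹ * b₁)⁻¹] : Matrix (Fin 2) (Fin 2) K) *
      !![a₁, b₁; a₂, b₂] = 1 := by
    rw [Matrix.mul_fin_two, e11, e12, e21, e22]
    exact Matrix.one_fin_two.symm
  refine ⟨hYX, ?_⟩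
  -- now the right inverse: X * Y = 1
  have ht : b₁ * b₂⁻¹ * a₂ * a₁⁻¹ ≠ 0 := by simp [ha₁, ha₂, hb₁, hb₂]
  have hw : b₂ * b₁⁻¹ * a₁ * a₂⁻¹ ≠ 0 := by simp [ha₁, ha₂, hb₁, hb₂]
  have fp : a₁ - b₁ * b₂⁻¹ * a₂ = (1 - b₁ * b₂⁻¹ * a₂ * a₁⁻¹) * a₁ := by
    rw [sub_mul, one_mul, mul_assoc (b₁ * b₂⁻¹ * a₂) a₁⁻¹ a₁, inv_mul_cancel₀ ha₁, mul_one]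
  have fr : b₁ - a₁ * a₂⁻¹ * b₂ = (1 - (b₁ * b₂⁻¹ * a₂ * a₁⁻¹)⁻¹) * b₁ := by
    simp [mul_inv_rev, sub_mul, mul_assoc, inv_mul_cancel_left₀, mul_inv_cancel_left₀,
      inv_mul_cancel₀, mul_inv_cancel₀, ha₁, ha₂, hb₁, hb₂]
  have fq' : a₂ - b₂ * b₁⁻¹ * a₁ = (1 - b₂ * b₁⁻¹ * a₁ * a₂⁻¹) * a₂ := by
    rw [sub_mul, one_mul, mul_assoc (b₂ * b₁⁻¹ * a₁) a₂⁻¹ a₂, inv_mul_cancel₀ ha₂, mul_one]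
  have fs' : b₂ - a₂ * a₁⁻¹ * b₁ = (1 - (b₂ * b₁⁻¹ * a₁ * a₂⁻¹)⁻¹) * b₂ := by
    simp [mul_inv_rev, sub_mul, mul_assoc, inv_mul_cancel_left₀, mul_inv_cancel_left₀,
      inv_mul_cancel₀, mul_inv_cancel₀, ha₁, ha₂, hb₁, hb₂]
  have h1t : (1 : K) - b₁ * b₂⁻¹ * a₂ * a₁⁻¹ ≠ 0 := by
    intro h; exact h₁ (by rw [fp, h, zero_mul])
  have h1w : (1 : K) - b₂ * b₁⁻¹ * a₁ * a₂⁻¹ ≠ 0 := by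
    intro h; exact h₂ (by rw [fq', h, zero_mul])
  -- off-diagonal factorizations
  have fp2 : a₁ - b₁ * b₂⁻¹ * a₂ = (a₁ * a₂⁻¹ - b₁ * b₂⁻¹) * a₂ := by
    rw [sub_mul, mul_assoc a₁ a₂⁻¹ a₂, inv_mul_cancel₀ ha₂, mul_one]
  have fr2 : b₁ - a₁ * a₂⁻¹ * b₂ = -(a₁ * a₂⁻¹ - b₁ * b₂⁻¹) * b₂ := by
    rw [neg_sub, sub_mul, mul_assoc b₁ b₂⁻¹ b₂, inv_mul_cancel₀ hb₂, mul_one]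
  have fq2 : a₂ - b₂ * b₁⁻¹ * a₁ = (a₂ * a₁⁻¹ - b₂ * b₁⁻¹) * a₁ := by
    rw [sub_mul, mul_assoc a₂ a₁⁻¹ a₁, inv_mul_cancel₀ ha₁, mul_one]
  have fs2 : b₂ - a₂ * a₁⁻¹ * b₁ = -(a₂ * a₁⁻¹ - b₂ * b₁⁻¹) * b₁ := by
    rw [neg_sub, sub_mul, mul_assoc b₂ b₁⁻¹ b₁, inv_mul_cancel₀ hb₁, mul_one]
  have hv : a₁ * a₂⁻¹ - b₁ * b₂⁻¹ ≠ 0 := by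
    intro h; exact h₁ (by rw [fp2, h, zero_mul])
  have hu : a₂ * a₁⁻¹ - b₂ * b₁⁻¹ ≠ 0 := by
    intro h; exact h₂ (by rw [fq2, h, zero_mul])
  -- entries of X * Y
  have f11 : a₁ * (a₁ - b₁ * b₂⁻¹ * a₂)⁻¹ + b₁ * (b₁ - a₁ * a₂⁻¹ * b₂)⁻¹ = 1 := by
    rw [fp, fr]
    exact quasi_aux_one _ a₁ b₁ ha₁ hb₁ ht h1t
  have f12 : a₁ * (a₂ - b₂ * b₁⁻¹ * a₁)⁻¹ + b₁ * (b₂ - a₂ * a₁⁻¹ * b₁)⁻¹ = 0 := by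
    rw [fq2, fs2]
    exact quasi_aux_zero _ a₁ b₁ ha₁ hb₁
  have f21 : a₂ * (a₁ - b₁ * b₂⁻¹ * a₂)⁻¹ + b₂ * (b₁ - a₁ * a₂⁻¹ * b₂)⁻¹ = 0 := by
    rw [fp2, fr2]
    exact quasi_aux_zero _ a₂ b₂ ha₂ hb₂
  have f22 : a₂ * (a₂ - b₂ * b₁⁻¹ * a₁)⁻¹ + b₂ * (b₂ - a₂ * a₁⁻¹ * b₁)⁻¹ = 1 := by
    rw [fq', fs']
    exact quasi_aux_one _ a₂ b₂ ha₂ hb₂ hw h1w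
  have hXY : (!![a₁, b₁; a₂, b₂] : Matrix (Fin 2) (Fin 2) K) *
      !![(a₁ - b₁ * b₂⁻¹ * a₂)⁻¹, (a₂ - b₂ * b₁⁻¹ * a₁)⁻¹;
        (b₁ - a₁ * a₂⁻¹ * b₂)⁻¹, (b₂ - a₂ * a₁⁻¹ * b₁)⁻¹] = 1 := by
    rw [Matrix.mul_fin_two, f11, f12, f21, f22]
    exact Matrix.one_fin_two.symm
  exact ⟨⟨!![a₁, b₁; a₂, b₂], _, hXY, hYX⟩, rfl⟩
end
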